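/- Let A_m = d/dζ on H¹(0,1), α > 0, ψ(x) = ∫_0^1 f(s)x(s)ds with f ∈ L²(0,1), ε > 0, and θ ≡ 1. For x ∈ H¹(0,1) with x(1) + εψ(x) = 0, one has ⟨x', x⟩_{L²} − α‖x‖² = ½(x(1)² − x(0)²) − α‖x‖² ≤ (ε²‖f‖²/2 − α)‖x‖² − ½ x(0)². In particular, if 0 < ε ≤ √(2α)/‖f‖ then ⟨A_m x, x⟩ − α‖x‖² ≤ 0, i.e., the operator x ↦ x' − αx is dissipative on {x ∈ H¹(0,1) : x(1) + εψ(x) = 0}. -/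

import Mathlib

open MeasureTheory intervalIntegral

/-- Let `A_m = d/dζ` on `H¹(0,1)`, `α > 0`, `ψ(x) = ∫_0^1 f(s)x(s) ds` with
`f ∈ L²(0,1)`, and `ε > 0`.  For `x ∈ H¹(0,1)` with `x(1) + εψ(x) = 0`, one has
`⟨x',x⟩ − α‖x‖² = ½(x(1)² − x(0)²) − α‖x‖² ≤ (ε²‖f‖²/2 − α)‖x‖² − ½ x(0)²`.  In particular,
if `0 < ε ≤ √(2α)/‖f‖` then `⟨A_m x, x⟩ − α‖x‖² ≤ 0`, i.e. `x ↦ x' − αx` is dissipative on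
`{x ∈ H¹(0,1) : x(1) + εψ(x) = 0}`. -/
theorem stmt16
    (α ε : ℝ) (hα : 0 < α) (hε : 0 < ε)
    (f : ℝ → ℝ) (hfI : IntervalIntegrable f volume 0 1)
    (hf2 : IntervalIntegrable (fun s => f s ^ 2) volume 0 1)
    (x x' : ℝ → ℝ)
    -- `x ∈ H¹(0,1)` with derivative `x'`
    (hderiv : ∀ t ∈ Set.Icc (0:ℝ) 1, HasDerivAt x (x' t) t)
    (hx'I : IntervalIntegrable x' volume 0 1)
    (hx'2 : IntervalIntegrable (fun s => x' s ^ 2) volume 0 1)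
    -- the boundary condition `x(1) + ε ψ(x) = 0`
    (hbc : x 1 + ε * (∫ s in (0:ℝ)..1, f s * x s) = 0) :
    ((∫ s in (0:ℝ)..1, x' s * x s) - α * ∫ s in (0:ℝ)..1, x s ^ 2
        = (x 1 ^ 2 - x 0 ^ 2) / 2 - α * ∫ s in (0:ℝ)..1, x s ^ 2) ∧
    ((∫ s in (0:ℝ)..1, x' s * x s) - α * ∫ s in (0:ℝ)..1, x s ^ 2
        ≤ (ε ^ 2 * (∫ s in (0:ℝ)..1, f s ^ 2) / 2 - α) * (∫ s in (0:ℝ)..1, x s ^ 2)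
          - x 0 ^ 2 / 2) ∧
    (ε ≤ Real.sqrt (2 * α) / Real.sqrt (∫ s in (0:ℝ)..1, f s ^ 2) →
      (∫ s in (0:ℝ)..1, x' s * x s) - α * ∫ s in (0:ℝ)..1, x s ^ 2 ≤ 0) := by
  have huIcc : Set.uIcc (0:ℝ) 1 = Set.Icc 0 1 := Set.uIcc_of_le zero_le_one
  have hxc : ContinuousOn x (Set.uIcc (0:ℝ) 1) := by
    rw [huIcc]
    exact fun t ht => (hderiv t ht).continuousAt.continuousWithinAt
  have hx2 : IntervalIntegrable (fun s => x s ^ 2) volume 0 1 := by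
    have : ContinuousOn (fun s => x s ^ 2) (Set.uIcc (0:ℝ) 1) := by
      exact (hxc.pow 2)
    exact this.intervalIntegrable
  have hfx : IntervalIntegrable (fun s => f s * x s) volume 0 1 :=
    hfI.mul_continuousOn hxc
  have hx'x : IntervalIntegrable (fun s => x' s * x s) volume 0 1 :=
    hx'I.mul_continuousOn hxc
  -- Part 1: fundamental theorem of calculus
  have h1 : (∫ s in (0:ℝ)..1, x' s * x s) = (x 1 ^ 2 - x 0 ^ 2) / 2 := by
    have key : (∫ s in (0:ℝ)..1, x' s * x s) = x 1 * x 1 / 2 - x 0 * x 0 / 2 := by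
      refine integral_eq_sub_of_hasDerivAt (f := fun t => x t * x t / 2) ?_ hx'x
      intro t ht
      rw [huIcc] at ht
      have h : HasDerivAt (fun t => x t * x t / 2) ((x' t * x t + x t * x' t) / 2) t := ((hderiv t ht).mul (hderiv t ht)).div_const 2
      refine h.congr_deriv ?_
      ring
    rw [key]; ring
  -- Cauchy–Schwarz via discriminant
  set P := ∫ s in (0:ℝ)..1, f s * x s with hP
  set F := ∫ s in (0:ℝ)..1, f s ^ 2 with hF
  set X := ∫ s in (0:ℝ)..1, x s ^ 2 with hX
  have hXnn : 0 ≤ X := by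
    apply intervalIntegral.integral_nonneg zero_le_one
    intro s _; positivity
  have hFnn : 0 ≤ F := by
    apply intervalIntegral.integral_nonneg zero_le_one
    intro s _; positivity
  have hCS : P ^ 2 ≤ X * F := by
    have hquad : ∀ t : ℝ, 0 ≤ X * (t * t) + (2 * P) * t + F := by
      intro t
      have hnn : 0 ≤ ∫ s in (0:ℝ)..1, (t * x s + f s) ^ 2 := by
        apply intervalIntegral.integral_nonneg zero_le_one
        intro s _; positivity
      have hexp : (∫ s in (0:ℝ)..1, (t * x s + f s) ^ 2)
          = t ^ 2 * X + (2 * t) * P + F := by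
        have : (fun s => (t * x s + f s) ^ 2)
            = fun s => (t ^ 2 * x s ^ 2 + (2 * t) * (f s * x s)) + f s ^ 2 := by
          funext s; ring
        rw [this]
        rw [intervalIntegral.integral_add (((hx2.const_mul _).add (hfx.const_mul _))) hf2,
          intervalIntegral.integral_add (hx2.const_mul _) (hfx.const_mul _),
          intervalIntegral.integral_const_mul, intervalIntegral.integral_const_mul]
      rw [hexp] at hnn
      nlinarith [hnn]
    have hd := discrim_le_zero hquad
    rw [discrim] at hd
    nlinarith [hd]
  have hx1 : x 1 = -(ε * P) := by linarith [hbc]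
  have hx1sq : x 1 ^ 2 ≤ ε ^ 2 * F * X := by
    rw [hx1]
    nlinarith [hCS, sq_nonneg ε]
  have h2 : (∫ s in (0:ℝ)..1, x' s * x s) - α * X
      ≤ (ε ^ 2 * F / 2 - α) * X - x 0 ^ 2 / 2 := by
    rw [h1]; nlinarith [hx1sq]
  refine ⟨by rw [h1], h2, ?_⟩
  intro hεle
  rcases eq_or_lt_of_le hFnn with hF0 | hFpos
  · have : (ε ^ 2 * F / 2 - α) * X - x 0 ^ 2 / 2 ≤ 0 := by
      rw [← hF0]
      nlinarith [hXnn, sq_nonneg (x 0)]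
    linarith [h2]
  · have hsF : 0 < Real.sqrt F := Real.sqrt_pos.mpr hFpos
    have h3 : ε * Real.sqrt F ≤ Real.sqrt (2 * α) := by
      rw [div_eq_mul_inv] at hεle
      calc ε * Real.sqrt F ≤ Real.sqrt (2 * α) * (Real.sqrt F)⁻¹ * Real.sqrt F := by
            apply mul_le_mul_of_nonneg_right hεle hsF.le
        _ = Real.sqrt (2 * α) := by field_simp
    have h4 : ε ^ 2 * F ≤ 2 * α := by
      have := mul_self_le_mul_self (by positivity : (0:ℝ) ≤ ε * Real.sqrt F) h3
      have hs2 : Real.sqrt (2 * α) * Real.sqrt (2 * α) = 2 * α :=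
        Real.mul_self_sqrt (by linarith)
      have hsFsq : Real.sqrt F * Real.sqrt F = F := Real.mul_self_sqrt hFnn
      nlinarith [this]
    have : (ε ^ 2 * F / 2 - α) * X - x 0 ^ 2 / 2 ≤ 0 := by
      have hcoef : ε ^ 2 * F / 2 - α ≤ 0 := by linarith
      nlinarith [hXnn, sq_nonneg (x 0), mul_nonpos_of_nonpos_of_nonneg hcoef hXnn]
    linarith [h2]
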